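/- Let m, k, n be natural numbers with 2k < m, let c : Fin m → ℝ be strictly increasing, let α be a natural number and β : Fin k → ℕ an antitone function with α > β 0, and define the score vector s : Fin m → ℕ by s(p) = α if p.val < m − k and s(p) = β(p.val − (m − k)) otherwise. Let ℓ, u : Fin n → ℝ with ℓ_j ≤ u_j for all j, and let i be a candidate with i.val < k or i.val ≥ m − k. Then the following are equivalent: (1) there exists x : Fin n → ℝ with x_j ∈ [ℓ_j, u_j] for all j such that ∑_{j} s(rank_{x_j}(i)) ≥ ∑_{j} s(rank_{x_j}(i')) for every candidate i'; (2) for every voter j there exists y ∈ [ℓ_j, u_j] with rank_y(i) < m − k. -/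
import Mathlib


/-- The tie-broken rank of candidate `i` for a voter at position `x` (the closest candidate
has rank 0), bundled as an element of `Fin m`. -/
noncomputable def rankFin {m : ℕ} (c : Fin m → ℝ) (x : ℝ) (i : Fin m) : Fin m :=
  ⟨(Finset.univ.filter fun j => |x - c j| < |x - c i| ∨ (|x - c j| = |x - c i| ∧ j < i)).card, by
    have hi : i ∉ (Finset.univ.filter fun j =>
        |x - c j| < |x - c i| ∨ (|x - c j| = |x - c i| ∧ j < i)) := by simp
    have hss : (Finset.univ.filter fun j =>
        |x - c j| < |x - c i| ∨ (|x - c j| = |x - c i| ∧ j < i)) ⊂ Finset.univ :=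
      ⟨Finset.subset_univ _, fun hsub => hi (hsub (Finset.mem_univ i))⟩
    simpa using Finset.card_lt_card hss⟩

/-- The weighted veto score vector `(α, …, α, β 0, …, β (k-1))` on `m` positions. -/
def wvScore (m k : ℕ) (α : ℕ) (β : Fin k → ℕ) : Fin m → ℕ :=
  fun p => if h : p.val < m - k then α else β ⟨p.val - (m - k), by have := p.isLt; omega⟩

lemma rank_add_farther_lt {m : ℕ} (c : Fin m → ℝ) (x : ℝ) (i : Fin m)
    (T : Finset (Fin m)) (hT : ∀ j ∈ T, |x - c i| < |x - c j|) :
    (rankFin c x i).val + T.card < m := by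
  set S := Finset.univ.filter fun j =>
      |x - c j| < |x - c i| ∨ (|x - c j| = |x - c i| ∧ j < i) with hS
  have hiT : i ∉ T := fun h => lt_irrefl _ (hT i h)
  have hiS : i ∉ S := by simp [hS]
  have hdisj : Disjoint S (insert i T) := by
    rw [Finset.disjoint_right]
    intro j hj hjS
    rcases Finset.mem_insert.1 hj with rfl | hjT
    · exact hiS hjS
    · have h1 := hT j hjT
      have h2 := (Finset.mem_filter.1 hjS).2
      rcases h2 with h2 | ⟨h2, _⟩
      · exact absurd (h2.trans h1) (lt_irrefl _)
      · rw [h2] at h1; exact lt_irrefl _ h1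
  have hcard : S.card + (insert i T).card ≤ m := by
    rw [← Finset.card_union_of_disjoint hdisj]
    simpa using Finset.card_le_card (Finset.subset_univ (S ∪ insert i T))
  rw [Finset.card_insert_of_notMem hiT] at hcard
  show S.card + T.card < m
  omega

/-- A "middle" candidate always gets rank below `m - k`. -/
lemma middle_rank_lt {m k : ℕ} (c : Fin m → ℝ) (hc : StrictMono c)
    (x : ℝ) (i : Fin m) (h1 : k ≤ i.val) (h2 : i.val < m - k) :
    (rankFin c x i).val < m - k := by
  rcases le_total x (c i) with hx | hx
  · have key := rank_add_farther_lt c x i (Finset.Ioi i) (fun j hj => by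
      have hij : i < j := Finset.mem_Ioi.1 hj
      have hcij : c i < c j := hc hij
      have e1 : |x - c i| = c i - x := by rw [abs_of_nonpos (by linarith)]; ring
      have e2 : |x - c j| = c j - x := by rw [abs_of_nonpos (by linarith)]; ring
      rw [e1, e2]; linarith)
    have hcT : (Finset.Ioi i).card = m - 1 - i.val := Fin.card_Ioi i
    omega
  · have key := rank_add_farther_lt c x i (Finset.Iio i) (fun j hj => by
      have hij : j < i := Finset.mem_Iio.1 hj
      have hcij : c j < c i := hc hij
      have e1 : |x - c i| = x - c i := abs_of_nonneg (by linarith)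
      have e2 : |x - c j| = x - c j := abs_of_nonneg (by linarith)
      rw [e1, e2]; linarith)
    have hcT : (Finset.Iio i).card = i.val := Fin.card_Iio i
    omega

lemma wvScore_eq {m k α : ℕ} {β : Fin k → ℕ} {p : Fin m} (hp : p.val < m - k) :
    wvScore m k α β p = α := dif_pos hp

lemma wvScore_lt {m k α : ℕ} {β : Fin k → ℕ} (hk : 0 < k) (hβ : Antitone β)
    (hαβ : β ⟨0, hk⟩ < α) {p : Fin m} (hp : ¬ p.val < m - k) :
    wvScore m k α β p < α := by
  rw [wvScore, dif_neg hp]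
  calc β _ ≤ β ⟨0, hk⟩ := hβ (by simp)
    _ < α := hαβ

lemma wvScore_le {m k α : ℕ} {β : Fin k → ℕ} (hk : 0 < k) (hβ : Antitone β)
    (hαβ : β ⟨0, hk⟩ < α) (p : Fin m) : wvScore m k α β p ≤ α := by
  by_cases hp : p.val < m - k
  · exact le_of_eq (wvScore_eq hp)
  · exact le_of_lt (wvScore_lt hk hβ hαβ hp)

/-- The characterization underlying Theorem 5.5: under a weighted veto rule, a candidate
among the leftmost `k` or rightmost `k` is a possible winner of the partial spatial profile
`(ℓ, u)` iff every voter can be placed in its interval so as to award it the top score `α`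
(i.e. a rank below `m - k`). -/
theorem weighted_veto_extreme_candidate_possible_winner_iff
    (m k n : ℕ) (hk : 0 < k) (hkm : 2 * k < m)
    (c : Fin m → ℝ) (hc : StrictMono c)
    (α : ℕ) (β : Fin k → ℕ) (hβ : Antitone β) (hαβ : β ⟨0, hk⟩ < α)
    (ℓ u : Fin n → ℝ) (hlu : ∀ j, ℓ j ≤ u j)
    (i : Fin m) (hi : i.val < k ∨ m - k ≤ i.val) :
    (∃ x : Fin n → ℝ, (∀ j, x j ∈ Set.Icc (ℓ j) (u j)) ∧
        ∀ i' : Fin m, ∑ j : Fin n, wvScore m k α β (rankFin c (x j) i')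
          ≤ ∑ j : Fin n, wvScore m k α β (rankFin c (x j) i)) ↔
    (∀ j : Fin n, ∃ y ∈ Set.Icc (ℓ j) (u j), (rankFin c y i).val < m - k) := by
  constructor
  · rintro ⟨x, hx, hwin⟩ j
    by_cases hr : (rankFin c (x j) i).val < m - k
    · exact ⟨x j, hx j, hr⟩
    · exfalso
      -- the middle candidate beats i
      set i'' : Fin m := ⟨k, by omega⟩ with hi''
      have hmid : ∀ j' : Fin n, wvScore m k α β (rankFin c (x j') i'') = α := fun j' =>
        wvScore_eq (middle_rank_lt c hc (x j') i'' le_rfl (by simp [hi'']; omega))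
      have hstrict : ∑ j' : Fin n, wvScore m k α β (rankFin c (x j') i)
          < ∑ j' : Fin n, wvScore m k α β (rankFin c (x j') i'') := by
        refine Finset.sum_lt_sum (fun j' _ => ?_) ⟨j, Finset.mem_univ j, ?_⟩
        · rw [hmid j']; exact wvScore_le hk hβ hαβ _
        · rw [hmid j]; exact wvScore_lt hk hβ hαβ hr
      exact absurd (hwin i'') (not_le.2 hstrict)
  · intro h
    choose y hy hrank using h
    refine ⟨y, hy, fun i' => ?_⟩
    calc ∑ j : Fin n, wvScore m k α β (rankFin c (y j) i')
        ≤ ∑ _j : Fin n, α := Finset.sum_le_sum fun j _ => wvScore_le hk hβ hαβ _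
      _ = ∑ j : Fin n, wvScore m k α β (rankFin c (y j) i) :=
          Finset.sum_congr rfl fun j _ => (wvScore_eq (hrank j)).symm
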